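/- arXiv:1408.1778 — 4 statements merged into one kernel-verified Lean document; each statement's English description precedes it below -/
import Mathlib

section
/- Let (X, d) be a metric space with basepoint e and η : [0,∞) → [0,∞) a homeomorphism. Suppose (f_k) is a sequence of η-quasisymmetric self-maps of X with f_k(e) = e, and there is p ≠ e, p' ≠ e with f_k(p) → p'. Then for all 0 < r < R the family (f_k) is uniformly equicontinuous on the annulus A_{r,R}: there is an increasing homeomorphism ω from [0, 2R] onto an interval [0, S] such that d(f_k(q₁), f_k(q₂)) ≤ ω(d(q₁, q₂)) for all q₁, q₂ ∈ A_{r,R} and all k. -/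
/-- `f` is `η`-quasisymmetric: `d(f q₁, f p) / d(f q₂, f p) ≤ η (d(q₁,p)/d(q₂,p))`
for all `p, q₁, q₂` with `q₂ ≠ p` (stated in multiplied-out form). -/
def IsQS {X : Type*} [MetricSpace X] (η : ℝ → ℝ) (f : X → X) : Prop :=
  ∀ p q₁ q₂ : X, q₂ ≠ p →
    dist (f q₁) (f p) ≤ η (dist q₁ p / dist q₂ p) * dist (f q₂) (f p)

/-- `η` is an (increasing) homeomorphism of `[0,∞)` onto itself. -/
def IsHomeoOfIci (η : ℝ → ℝ) : Prop :=
  η 0 = 0 ∧ StrictMonoOn η (Set.Ici (0 : ℝ)) ∧ ContinuousOn η (Set.Ici (0 : ℝ)) ∧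
    Set.BijOn η (Set.Ici (0 : ℝ)) (Set.Ici (0 : ℝ))

/-!
Fix `p ≠ e`. Since every `f_k` fixes `e`, quasisymmetry with base point `e` gives
`d(f_k q, e) ≤ η(d(q,e)/d(p,e)) d(f_k p, e)`, and `d(f_k p, e)` is bounded because `f_k p`
converges; so the images of the ball of radius `R` stay in a fixed ball of radius `C`.
Quasisymmetry with base point `q₂` then gives
`d(f_k q₁, f_k q₂) ≤ η(d(q₁,q₂)/d(q₂,e)) d(e, f_k q₂) ≤ C η(d(q₁,q₂)/r)`
on the annulus, and `ω t = C η(t/r)` is the required modulus.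
-/

open Set

theorem StrictMonoOn.bijOn_Icc {α β : Type*} [ConditionallyCompleteLinearOrder α]
    [DenselyOrdered α] [TopologicalSpace α] [OrderTopology α] [LinearOrder β]
    [TopologicalSpace β] [OrderClosedTopology β] {g : α → β} {a b : α}
    (hg : StrictMonoOn g (Icc a b)) (hc : ContinuousOn g (Icc a b)) (hab : a ≤ b) :
    BijOn g (Icc a b) (Icc (g a) (g b)) :=
  ⟨hg.monotoneOn.mapsTo_Icc, hg.injOn,
    hc.surjOn_Icc (left_mem_Icc.2 hab) (right_mem_Icc.2 hab)⟩

namespace IsHomeoOfIci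

variable {η : ℝ → ℝ} (hη : IsHomeoOfIci η)
include hη

theorem strictMonoOn : StrictMonoOn η (Ici 0) :=
  hη.2.1

theorem monotoneOn : MonotoneOn η (Ici 0) :=
  hη.strictMonoOn.monotoneOn

theorem nonneg {x : ℝ} (hx : 0 ≤ x) : 0 ≤ η x :=
  hη.2.2.2.mapsTo hx

theorem pos {x : ℝ} (hx : 0 < x) : 0 < η x :=
  hη.1 ▸ hη.strictMonoOn self_mem_Ici hx.le hx

theorem strictMonoOn_const_mul_comp_div {C r : ℝ} (hC : 0 < C) (hr : 0 < r) :
    StrictMonoOn (fun t => C * η (t / r)) (Ici 0) := fun _ hx _ hy hxy =>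
  mul_lt_mul_of_pos_left
    (hη.strictMonoOn (div_nonneg hx hr.le) (div_nonneg hy hr.le) (div_lt_div_of_pos_right hxy hr)) hC

theorem continuousOn_const_mul_comp_div (C : ℝ) {r : ℝ} (hr : 0 < r) :
    ContinuousOn (fun t => C * η (t / r)) (Ici 0) :=
  continuousOn_const.mul <|
    hη.2.2.1.comp (continuous_id.div_const r).continuousOn fun _ hx => div_nonneg hx hr.le

end IsHomeoOfIci

namespace IsQS

variable {X : Type*} [MetricSpace X] {η : ℝ → ℝ} {f : X → X} {e : X}

theorem dist_le_of_map_eq (hf : IsQS η f) (he : f e = e) (q₁ : X) {q₂ : X} (hq₂ : q₂ ≠ e) :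
    dist (f q₁) (f q₂) ≤ η (dist q₁ q₂ / dist q₂ e) * dist (f q₂) e := by
  simpa only [he, dist_comm e] using hf q₂ q₁ e hq₂.symm

theorem dist_map_le_of_map_eq (hf : IsQS η f) (he : f e = e) (q : X) {p : X} (hp : p ≠ e) :
    dist (f q) e ≤ η (dist q e / dist p e) * dist (f p) e := by
  simpa only [he] using hf e q p hp

theorem dist_le_on_annulus (hη : IsHomeoOfIci η) (hf : IsQS η f) (he : f e = e) {p : X}
    (hp : p ≠ e) {r R : ℝ} (hr : 0 < r) (q₁ : X) {q₂ : X} (hq₂r : r ≤ dist q₂ e)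
    (hq₂R : dist q₂ e ≤ R) :
    dist (f q₁) (f q₂) ≤ η (R / dist p e) * dist (f p) e * η (dist q₁ q₂ / r) := by
  have hdp : 0 < dist p e := dist_pos.2 hp
  have hq₂ : q₂ ≠ e := dist_pos.1 (hr.trans_le hq₂r)
  have hR : 0 ≤ R := dist_nonneg.trans hq₂R
  have hratio : η (dist q₁ q₂ / dist q₂ e) ≤ η (dist q₁ q₂ / r) :=
    hη.monotoneOn (mem_Ici.2 (by positivity)) (mem_Ici.2 (by positivity))
      (div_le_div_of_nonneg_left dist_nonneg hr hq₂r)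
  have himage : dist (f q₂) e ≤ η (R / dist p e) * dist (f p) e :=
    (hf.dist_map_le_of_map_eq he q₂ hp).trans <| mul_le_mul_of_nonneg_right
      (hη.monotoneOn (mem_Ici.2 (by positivity)) (mem_Ici.2 (by positivity))
        (div_le_div_of_nonneg_right hq₂R hdp.le))
      dist_nonneg
  calc dist (f q₁) (f q₂) ≤ η (dist q₁ q₂ / dist q₂ e) * dist (f q₂) e :=
        hf.dist_le_of_map_eq he q₁ hq₂
    _ ≤ η (dist q₁ q₂ / r) * (η (R / dist p e) * dist (f p) e) :=
        mul_le_mul hratio himage dist_nonneg (hη.nonneg (by positivity))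
    _ = _ := mul_comm _ _

end IsQS

theorem stmt4_general {X : Type*} [MetricSpace X] (e : X) (η : ℝ → ℝ)
    (hη : IsHomeoOfIci η)
    (f : ℕ → X → X) (hf : ∀ k, IsQS η (f k)) (hfe : ∀ k, f k e = e)
    (p p' : X) (hp : p ≠ e)
    (hconv : Filter.Tendsto (fun k => f k p) Filter.atTop (nhds p')) :
    ∀ r R : ℝ, 0 < r → r < R → ∃ S : ℝ, 0 < S ∧ ∃ ω : ℝ → ℝ,
      ω 0 = 0 ∧ StrictMonoOn ω (Set.Icc 0 (2 * R)) ∧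
      ContinuousOn ω (Set.Icc 0 (2 * R)) ∧
      Set.BijOn ω (Set.Icc 0 (2 * R)) (Set.Icc 0 S) ∧
      ∀ k, ∀ q₁ q₂ : X,
        r ≤ dist q₁ e → dist q₁ e ≤ R → r ≤ dist q₂ e → dist q₂ e ≤ R →
        dist (f k q₁) (f k q₂) ≤ ω (dist q₁ q₂) := by
  intro r R hr hrR
  obtain ⟨M, hM⟩ := (hconv.dist tendsto_const_nhds).bddAbove_range
  set C := η (R / dist p e) * max M 1 with hCdef
  have hC : 0 < C :=
    mul_pos (hη.pos (div_pos (hr.trans hrR) (dist_pos.2 hp))) (lt_max_of_lt_right one_pos)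
  have hsub : Icc 0 (2 * R) ⊆ Ici 0 := Icc_subset_Ici_self
  have hmono := (hη.strictMonoOn_const_mul_comp_div hC hr).mono hsub
  have hcont := (hη.continuousOn_const_mul_comp_div C hr).mono hsub
  have hbij := hmono.bijOn_Icc hcont (by linarith)
  simp only [zero_div, hη.1, mul_zero] at hbij
  refine ⟨_, mul_pos hC (hη.pos (div_pos (by linarith) hr)), _, by simp [hη.1], hmono, hcont,
    hbij, fun k q₁ q₂ _ _ hq₂r hq₂R => ?_⟩
  calc dist (f k q₁) (f k q₂)
      ≤ η (R / dist p e) * dist (f k p) e * η (dist q₁ q₂ / r) :=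
        (hf k).dist_le_on_annulus hη (hfe k) hp hr q₁ hq₂r hq₂R
    _ ≤ C * η (dist q₁ q₂ / r) := by
        rw [hCdef]
        gcongr
        · exact hη.nonneg (div_nonneg dist_nonneg hr.le)
        · exact hη.nonneg (div_nonneg (hr.trans hrR).le dist_nonneg)
        · exact (hM ⟨k, rfl⟩).trans (le_max_left _ _)

/-- If `(f_k)` is a sequence of `η`-quasisymmetric self-maps of a metric
space `X` fixing the basepoint `e`, and `f_k p → p'` for some `p ≠ e`, `p' ≠ e`, then for
all `0 < r < R` the family `(f_k)` is uniformly equicontinuous on the annulus `A_{r,R}`: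
there is an increasing homeomorphism `ω : [0, 2R] → [0, S]` such that
`d(f_k q₁, f_k q₂) ≤ ω (d(q₁, q₂))` for all `q₁, q₂ ∈ A_{r,R}` and all `k`. -/
theorem stmt4 {X : Type*} [MetricSpace X] (e : X) (η : ℝ → ℝ)
    (hη : IsHomeoOfIci η)
    (f : ℕ → X → X) (hf : ∀ k, IsQS η (f k)) (hfe : ∀ k, f k e = e)
    (p p' : X) (hp : p ≠ e) (hp' : p' ≠ e)
    (hconv : Filter.Tendsto (fun k => f k p) Filter.atTop (nhds p')) :
    ∀ r R : ℝ, 0 < r → r < R → ∃ S : ℝ, 0 < S ∧ ∃ ω : ℝ → ℝ,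
      ω 0 = 0 ∧ StrictMonoOn ω (Set.Icc 0 (2 * R)) ∧
      ContinuousOn ω (Set.Icc 0 (2 * R)) ∧
      Set.BijOn ω (Set.Icc 0 (2 * R)) (Set.Icc 0 S) ∧
      ∀ k, ∀ q₁ q₂ : X,
        r ≤ dist q₁ e → dist q₁ e ≤ R → r ≤ dist q₂ e → dist q₂ e ≤ R →
        dist (f k q₁) (f k q₂) ≤ ω (dist q₁ q₂) :=
  stmt4_general e η hη f hf hfe p p' hp hconv
end

section
/- Let (X, d) be a metric space with basepoint e and η a homeomorphism of [0,∞). Suppose (f_k) is a sequence of η-quasisymmetric bijections of X whose inverses are also η-quasisymmetric, with f_k(e) = e, and suppose f_k(p) → p' for some p, p' ≠ e. Then f_k^{-1}(p') → p as k → ∞. -/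
open Filter Topology

lemma IsHomeoOfIci.tendsto_comp_nhds_zero {η : ℝ → ℝ} (hη : IsHomeoOfIci η) {α : Type*}
    {l : Filter α} {u : α → ℝ} (hu : Tendsto u l (𝓝 0)) (hu_nonneg : ∀ᶠ a in l, 0 ≤ u a) :
    Tendsto (fun a => η (u a)) l (𝓝 0) := by
  have hcont : ContinuousWithinAt η (Set.Ici 0) 0 := hη.2.2.1 0 Set.self_mem_Ici
  have := hcont.tendsto.comp (tendsto_nhdsWithin_iff.2 ⟨hu, hu_nonneg⟩)
  rwa [hη.1] at this

lemma tendsto_dist_div_dist_nhds_zero {X : Type*} [MetricSpace X] {α : Type*} {l : Filter α}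
    {y : α → X} {p' e : X} (hy : Tendsto y l (𝓝 p')) (hp' : p' ≠ e) :
    Tendsto (fun a => dist p' (y a) / dist e (y a)) l (𝓝 0) := by
  have hnum : Tendsto (fun a => dist p' (y a)) l (𝓝 0) := by
    simpa using (tendsto_const_nhds (x := p')).dist hy
  have hden : Tendsto (fun a => dist e (y a)) l (𝓝 (dist e p')) := tendsto_const_nhds.dist hy
  have := hnum.div hden (dist_ne_zero.2 hp'.symm)
  rwa [zero_div] at this

theorem stmt5_general {X : Type*} [MetricSpace X] (e : X) (η : ℝ → ℝ)
    (hη : IsHomeoOfIci η)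
    (f g : ℕ → X → X)
    (hg : ∀ k, IsQS η (g k))
    (hinv : ∀ k, Function.LeftInverse (g k) (f k) ∧ Function.RightInverse (g k) (f k))
    (hfe : ∀ k, f k e = e)
    (p p' : X) (hp : p ≠ e) (hp' : p' ≠ e)
    (hconv : Filter.Tendsto (fun k => f k p) Filter.atTop (nhds p')) :
    Filter.Tendsto (fun k => g k p') Filter.atTop (nhds p) := by
  have hge : ∀ k, g k e = e := fun k => by simpa only [hfe k] using (hinv k).1 e
  have hfp_ne : ∀ k, f k p ≠ e := fun k h => hp <| by rw [← (hinv k).1 p, h, hge k]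
  have hbound : ∀ k,
      dist (g k p') p ≤ η (dist p' (f k p) / dist e (f k p)) * dist e p := fun k => by
    simpa only [(hinv k).1 p, hge k] using hg k (f k p) p' e (hfp_ne k).symm
  have hratio := tendsto_dist_div_dist_nhds_zero hconv hp'
  have hη_ratio := hη.tendsto_comp_nhds_zero hratio
    (Eventually.of_forall fun _ => div_nonneg dist_nonneg dist_nonneg)
  rw [tendsto_iff_dist_tendsto_zero]
  exact squeeze_zero (fun _ => dist_nonneg) hbound (by simpa using hη_ratio.mul_const (dist e p))

/-- If `(f_k)` is a sequence of `η`-quasisymmetric bijections of a metric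
space `X`, whose inverses `g_k` are also `η`-quasisymmetric, with `f_k e = e`, and
`f_k p → p'` for some `p ≠ e`, `p' ≠ e`, then `f_k⁻¹ p' → p` as `k → ∞`. -/
theorem stmt5 {X : Type*} [MetricSpace X] (e : X) (η : ℝ → ℝ)
    (hη : IsHomeoOfIci η)
    (f g : ℕ → X → X)
    (hf : ∀ k, IsQS η (f k)) (hg : ∀ k, IsQS η (g k))
    (hbij : ∀ k, Function.Bijective (f k))
    (hinv : ∀ k, Function.LeftInverse (g k) (f k) ∧ Function.RightInverse (g k) (f k))
    (hfe : ∀ k, f k e = e)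
    (p p' : X) (hp : p ≠ e) (hp' : p' ≠ e)
    (hconv : Filter.Tendsto (fun k => f k p) Filter.atTop (nhds p')) :
    Filter.Tendsto (fun k => g k p') Filter.atTop (nhds p) :=
  stmt5_general e η hη f g hg hinv hfe p p' hp hp' hconv
end

section
/- Let g = g_{-1} ⊕ ⋯ ⊕ g_{-ℓ} be a stratified Lie algebra with adapted basis, and let h = g^{ab} ⋊ g be the semidirect product defined by [Y_i,Y_j]=0, [Y_i,Z_j]= Σ_k c_{ij}^k Y_k, [Z_i,Z_j]= Σ_k c_{ij}^k Z_k. Define h_{-k} to be the span of the Y_i and Z_j with indices in the k-th stratum. Then [h_{-1}, h_{-k}] = h_{-k-1} for 1 ≤ k < ℓ, so h is a stratified Lie algebra of step ℓ. -/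
/-- Let `g = g_{-1} ⊕ ⋯ ⊕ g_{-ℓ}` be a stratified Lie algebra (the stratum
`g_{-(k+1)}` is encoded by the submodule `s k`, with `[g_{-1}, g_{-j}]` spanning
`g_{-j-1}`). On `h = g^{ab} × g` with the semidirect-product bracket
`br (Y,Z) (Y',Z') = ([Z,Y'] - [Z',Y], [Z,Z'])`, the strata
`h_{-(k+1)} = s k × s k` satisfy `[h_{-1}, h_{-k}] = h_{-k-1}` for `1 ≤ k < ℓ`,
so `h` is a stratified Lie algebra of step `ℓ`. -/
theorem stmt7 {g : Type*} [LieRing g] [LieAlgebra ℝ g]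
    (ℓ : ℕ) (hℓ : 0 < ℓ)
    (s : ℕ → Submodule ℝ g)
    (hstrat : ∀ j, j + 1 < ℓ →
      Submodule.span ℝ {x : g | ∃ a ∈ s 0, ∃ b ∈ s j, ⁅a, b⁆ = x} = s (j + 1))
    (br : (g × g) → (g × g) → (g × g))
    (hbr : ∀ a b : g × g, br a b = (⁅a.2, b.1⁆ - ⁅b.2, a.1⁆, ⁅a.2, b.2⁆))
    (hs : ℕ → Submodule ℝ (g × g))
    (hhs : ∀ k, hs k = (s k).prod (s k)) :
    ∀ k, k + 1 < ℓ →
      Submodule.span ℝ {x : g × g | ∃ a ∈ hs 0, ∃ b ∈ hs k, br a b = x} = hs (k + 1) := by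
  intro k hk
  have hS := hstrat k hk
  apply le_antisymm
  · rw [Submodule.span_le]
    rintro x ⟨a, ha, b, hb, rfl⟩
    rw [hhs] at ha
    rw [hhs] at hb
    rw [SetLike.mem_coe, hhs, hbr]
    refine ⟨?_, ?_⟩
    · refine sub_mem ?_ ?_
      · rw [← hS]; exact Submodule.subset_span ⟨a.2, ha.2, b.1, hb.1, rfl⟩
      · rw [← hS]
        have h2 : ⁅b.2, a.1⁆ = -⁅a.1, b.2⁆ := (lie_skew _ _).symm
        rw [h2]
        exact neg_mem (Submodule.subset_span ⟨a.1, ha.1, b.2, hb.2, rfl⟩)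
    · rw [← hS]; exact Submodule.subset_span ⟨a.2, ha.2, b.2, hb.2, rfl⟩
  · set T : Set (g × g) := {x : g × g | ∃ a ∈ hs 0, ∃ b ∈ hs k, br a b = x} with hT
    have h1 : s (k + 1) ≤ (Submodule.span ℝ T).comap (LinearMap.inl ℝ g g) := by
      rw [← hS, Submodule.span_le]
      rintro x ⟨a, ha, b, hb, rfl⟩
      refine Submodule.subset_span ⟨(0, a), ?_, (b, 0), ?_, ?_⟩
      · rw [hhs]; exact ⟨zero_mem _, ha⟩
      · rw [hhs]; exact ⟨hb, zero_mem _⟩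
      · rw [hbr]; simp
    have h2 : s (k + 1) ≤ (Submodule.span ℝ T).comap (LinearMap.inr ℝ g g) := by
      rw [← hS, Submodule.span_le]
      rintro x ⟨a, ha, b, hb, rfl⟩
      refine Submodule.subset_span ⟨(0, a), ?_, (0, b), ?_, ?_⟩
      · rw [hhs]; exact ⟨zero_mem _, ha⟩
      · rw [hhs]; exact ⟨zero_mem _, hb⟩
      · rw [hbr]; simp
    rw [hhs]
    rintro ⟨u, v⟩ ⟨hu, hv⟩
    have : ((u, v) : g × g) = (u, 0) + (0, v) := by simp
    rw [this]
    exact add_mem (h1 hu) (h2 hv)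
end

section
/- Let g be a stratified Lie algebra that does not satisfy the rank-one condition (i.e., there is no nonzero X in the complexification of g_{-1} such that ad X has rank 0 or 1 as an endomorphism of the complexification of g). Then the semidirect product h = g^{ab} ⋊ g (with its induced stratification) also does not satisfy the rank-one condition: for every nonzero W = Y + Z in the complexification of h_{-1} with Y ∈ g^{ab} and Z ∈ g, the rank of ad W is at least 2. -/
/-- Let `g` be (the complexification of) a stratified Lie algebra, with
first stratum `g1`, that does not satisfy the rank-one condition: for every nonzero
`X ∈ g1`, the endomorphism `ad X` has rank at least `2`. Then the semidirect product
`h = g^{ab} ⋊ g` (realized as `g × g` with bracket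
`br (Y,Z) (Y',Z') = ([Z,Y'] - [Z',Y], [Z,Z'])` and first stratum `g1 × g1`) also does
not satisfy the rank-one condition: for every nonzero `W = (Y, Z)` in its first
stratum, the rank of `ad W = br (Y,Z)` is at least `2`. -/
theorem stmt8 {g : Type*} [LieRing g] [LieAlgebra ℂ g]
    (g1 : Submodule ℂ g)
    (hrank : ∀ X ∈ g1, X ≠ 0 →
      2 ≤ Module.rank ℂ ↥(Submodule.span ℂ (Set.range (fun W : g => ⁅X, W⁆))))
    (br : (g × g) → (g × g) → (g × g))
    (hbr : ∀ a b : g × g, br a b = (⁅a.2, b.1⁆ - ⁅b.2, a.1⁆, ⁅a.2, b.2⁆)) :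
    ∀ Y Z : g, Y ∈ g1 → Z ∈ g1 → (Y, Z) ≠ (0 : g × g) →
      2 ≤ Module.rank ℂ ↥(Submodule.span ℂ (Set.range (br (Y, Z)))) := by
  intro Y Z hY hZ hne
  by_cases hZ0 : Z = 0
  · -- then Y ≠ 0, and the range is (span of range of ad Y) embedded via inl
    have hY0 : Y ≠ 0 := by
      intro h; exact hne (by simp [h, hZ0])
    have hrange : Set.range (br (Y, Z)) =
        (LinearMap.inl ℂ g g) '' (Set.range (fun W : g => ⁅Y, W⁆)) := by
      ext x
      constructor
      · rintro ⟨w, rfl⟩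
        refine ⟨⁅Y, w.2⁆, ⟨w.2, rfl⟩, ?_⟩
        rw [hbr]
        simp [hZ0, lie_skew]
      · rintro ⟨y, ⟨w, rfl⟩, rfl⟩
        refine ⟨(0, w), ?_⟩
        rw [hbr]
        simp [hZ0, lie_skew]
    have hspan : Submodule.span ℂ (Set.range (br (Y, Z))) =
        (Submodule.span ℂ (Set.range (fun W : g => ⁅Y, W⁆))).map (LinearMap.inl ℂ g g) := by
      rw [hrange, Submodule.span_image]
    rw [hspan]
    have hinj : Function.Injective (LinearMap.inl ℂ g g) := LinearMap.inl_injective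
    rw [← LinearEquiv.rank_eq
      (Submodule.equivMapOfInjective (LinearMap.inl ℂ g g) hinj
        (Submodule.span ℂ (Set.range (fun W : g => ⁅Y, W⁆))))]
    exact hrank Y hY hY0
  · -- then projection onto the second factor maps the span onto span of range of ad Z
    have key : (Submodule.span ℂ (Set.range (br (Y, Z)))).map (LinearMap.snd ℂ g g) =
        Submodule.span ℂ (Set.range (fun W : g => ⁅Z, W⁆)) := by
      rw [Submodule.map_span]
      congr 1
      ext x
      constructor
      · rintro ⟨y, ⟨w, rfl⟩, rfl⟩
        refine ⟨w.2, ?_⟩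
        rw [hbr]; simp
      · rintro ⟨w, rfl⟩
        refine ⟨br (Y, Z) (0, w), ⟨(0, w), rfl⟩, ?_⟩
        rw [hbr]; simp
    calc (2 : Cardinal) ≤ Module.rank ℂ ↥(Submodule.span ℂ (Set.range (fun W : g => ⁅Z, W⁆))) :=
          hrank Z hZ hZ0
      _ = Module.rank ℂ ↥((Submodule.span ℂ (Set.range (br (Y, Z)))).map (LinearMap.snd ℂ g g)) :=
          by rw [key]
      _ ≤ Module.rank ℂ ↥(Submodule.span ℂ (Set.range (br (Y, Z)))) :=
          rank_map_le _ _
end
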